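/- arXiv:2410.01161 — 2 statements merged into one kernel-verified Lean document; each statement's English description precedes it below -/
import Mathlib

section
/- Let 𝒜 and ℬ_1, …, ℬ_m be real N×N matrices, let u_1, …, u_m : ℝ → ℝ be continuous control signals, and let α(a) = ᾱ + α̲·a and β(b) = β̄ + β̲·b for fixed reals ᾱ, α̲, β̄, β̲. Suppose X : ℝ × [−1,1] × [−1,1] → ℝ^N is continuous, its time derivative ∂X/∂t exists and is jointly continuous, and for every t and every (a,b) ∈ [−1,1]² it satisfies ∂X/∂t(t,a,b) = α(a)·𝒜·X(t,a,b) + β(b)·(Σ_{j=1}^m u_j(t)·ℬ_j)·X(t,a,b). For natural numbers p, q define the Legendre coefficients x_{p,q}(t) = ∫_{−1}^1 ∫_{−1}^1 X(t,a,b) L_p(a) L_q(b) da db, where L_n is the normalized Legendre polynomial. Then each x_{p,q} is differentiable in t and satisfies the exact moment dynamics d x_{p,q}/dt = 𝒜·( ᾱ·x_{p,q} + α̲·(c_{p−1}·x_{p−1,q} + c_p·x_{p+1,q}) ) + (Σ_{j=1}^m u_j(t)·ℬ_j)·( β̄·x_{p,q} + β̲·(c_{q−1}·x_{p,q−1} +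 c_q·x_{p,q+1}) ), where c_n = (n+1)/√((2n+3)(2n+1)) and the terms with index −1 are absent (interpreted as zero) when p = 0 or q = 0. -/
open Matrix

/-- The Legendre polynomial by Rodrigues' formula. -/
noncomputable def legendreP (n : ℕ) (x : ℝ) : ℝ :=
  (1 / (2 ^ n * (n.factorial : ℝ))) * iteratedDeriv n (fun y : ℝ => (y ^ 2 - 1) ^ n) x

/-- The normalized Legendre polynomial `L_n = √((2n+1)/2) · P_n`. -/
noncomputable def legendreL (n : ℕ) (x : ℝ) : ℝ :=
  Real.sqrt ((2 * n + 1) / 2) * legendreP n x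

/-- The recurrence coefficient `c_n = (n+1)/√((2n+3)(2n+1))`. -/
noncomputable def legendreC (n : ℕ) : ℝ :=
  ((n : ℝ) + 1) / Real.sqrt ((2 * n + 3) * (2 * n + 1))

/-!
Write `g_n = Dⁿ (X² - 1)ⁿ`, so that `P_n = g_n / (2ⁿ n!)`. Applying the Leibniz rule to
`D (X² - 1)ⁿ⁺¹ = 2(n+1) X (X² - 1)ⁿ` and to `(X² - 1) · D (X² - 1)ⁿ⁺¹ = 2(n+1) X (X² - 1)ⁿ⁺¹` gives
`D g_{n+1} = 2(n+1) (X D g_n + (n+1) g_n)` and `2 (X² - 1) D g_n = g_{n+1} - 2(n+1) X g_n`;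
eliminating `D g_n` and `D g_{n+1}` yields Bonnet's recurrence
`(n+1) P_{n+1} = (2n+1) x P_n - n P_{n-1}`, which for the normalized polynomials is the three-term
relation `a L_p(a) = c_{p-1} L_{p-1}(a) + c_p L_{p+1}(a)`.

The moment `x_{p,q}` may be differentiated under the integral sign, since `∂X/∂t` is bounded on the
compact set `[t-1, t+1] × [-1,1]²`. Substituting the equation for `∂X/∂t`, the matrices leave the
integral by linearity, and the three-term relation in `a` (resp. `b`) rewrites the weight
`α(a) L_p(a) L_q(b)` (resp. `β(b) L_p(a) L_q(b)`) as a combination of neighbouring weights.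
-/

open MeasureTheory Set

namespace Polynomial

variable {R : Type*} [CommRing R]

theorem derivative_sq_sub_one_pow_succ (n : ℕ) :
    derivative ((X ^ 2 - 1 : R[X]) ^ (n + 1)) = 2 * ((n : R[X]) + 1) * ((X ^ 2 - 1) ^ n * X) := by
  rw [derivative_pow]
  simp only [derivative_sub, derivative_X_pow, derivative_one, map_natCast]
  push_cast
  ring

theorem iterate_derivative_sq_sub_one_pow_succ (n k : ℕ) :
    derivative^[k + 2] ((X ^ 2 - 1 : R[X]) ^ (n + 1)) =
      2 * ((n : R[X]) + 1) * (derivative^[k + 1] ((X ^ 2 - 1) ^ n) * X +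
        ((k : R[X]) + 1) * derivative^[k] ((X ^ 2 - 1) ^ n)) := by
  rw [Function.iterate_succ_apply, derivative_sq_sub_one_pow_succ,
    show 2 * ((n : R[X]) + 1) = C (2 * ((n : R) + 1)) by simp [C_ofNat],
    iterate_derivative_C_mul, iterate_derivative_mul_X]
  simp

theorem iterate_derivative_derivative_mul_sq_sub_one (p : R[X]) (k : ℕ) :
    derivative^[k + 1] (derivative p * (X ^ 2 - 1)) =
      derivative^[k + 2] p * (X ^ 2 - 1) + 2 * ((k : R[X]) + 1) * (derivative^[k + 1] p * X) +
        (k : R[X]) * ((k : R[X]) + 1) * derivative^[k] p := by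
  have h : derivative p * (X ^ 2 - 1) = derivative p * X * X - derivative p := by ring
  rw [h, iterate_derivative_sub, iterate_derivative_mul_X, iterate_derivative_derivative_mul_X,
    Nat.add_sub_cancel, iterate_derivative_derivative_mul_X,
    show derivative^[k + 2] p = derivative^[k + 1] (derivative p) from
      Function.iterate_succ_apply _ _ _]
  simp only [nsmul_eq_mul]
  push_cast
  ring

noncomputable def rodrigues (n : ℕ) : R[X] := derivative^[n] ((X ^ 2 - 1) ^ n)

theorem rodrigues_zero : rodrigues 0 = (1 : R[X]) := by simp [rodrigues]

theorem rodrigues_one : rodrigues 1 = (2 * X : R[X]) := by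
  simp [rodrigues, one_add_one_eq_two, C_ofNat]

theorem derivative_rodrigues_succ (n : ℕ) :
    derivative (rodrigues (n + 1) : R[X]) =
      2 * ((n : R[X]) + 1) * (X * derivative (rodrigues n) + ((n : R[X]) + 1) * rodrigues n) := by
  rw [rodrigues, rodrigues, ← Function.iterate_succ_apply' derivative,
    ← Function.iterate_succ_apply' derivative, iterate_derivative_sq_sub_one_pow_succ]
  ring

theorem sq_sub_one_mul_iterate_derivative_sq_sub_one_pow (n : ℕ) :
    (X ^ 2 - 1) * derivative^[n + 2] ((X ^ 2 - 1 : R[X]) ^ (n + 1)) =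
      ((n : R[X]) + 1) * ((n : R[X]) + 2) * derivative^[n] ((X ^ 2 - 1) ^ (n + 1)) := by
  have h : derivative ((X ^ 2 - 1 : R[X]) ^ (n + 1)) * (X ^ 2 - 1) =
      C (2 * ((n : R) + 1)) * ((X ^ 2 - 1) ^ (n + 1) * X) := by
    rw [derivative_sq_sub_one_pow_succ]
    simp only [map_mul, map_add, map_natCast, map_one, map_ofNat]
    ring
  have h' := congrArg (derivative^[n + 1]) h
  rw [iterate_derivative_derivative_mul_sq_sub_one, iterate_derivative_C_mul,
    iterate_derivative_mul_X] at h'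
  simp only [map_mul, map_add, map_natCast, map_one, map_ofNat, Nat.add_sub_cancel,
    nsmul_eq_mul] at h'
  push_cast at h'
  linear_combination h'

theorem sq_sub_one_mul_derivative_rodrigues (n : ℕ) :
    2 * (X ^ 2 - 1) * derivative (rodrigues n : R[X]) =
      rodrigues (n + 1) - 2 * ((n : R[X]) + 1) * X * rodrigues n := by
  cases n with
  | zero => simp [rodrigues_zero, rodrigues_one]
  | succ m =>
    have h := sq_sub_one_mul_iterate_derivative_sq_sub_one_pow (R := R) m
    rw [rodrigues, rodrigues, ← Function.iterate_succ_apply' derivative,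
      iterate_derivative_sq_sub_one_pow_succ (m + 1) m]
    push_cast
    linear_combination 2 * h

theorem rodrigues_succ_succ (n : ℕ) :
    rodrigues (n + 2) = 2 * (2 * (n : R[X]) + 3) * X * rodrigues (n + 1) -
      4 * ((n : R[X]) + 1) ^ 2 * rodrigues n := by
  have h₀ := sq_sub_one_mul_derivative_rodrigues (R := R) n
  have h₁ := sq_sub_one_mul_derivative_rodrigues (R := R) (n + 1)
  have hd := derivative_rodrigues_succ (R := R) n
  push_cast at h₁
  linear_combination -h₁ + 2 * (X ^ 2 - 1) * hd + 2 * ((n : R[X]) + 1) * X * h₀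

end Polynomial

section Legendre

open Polynomial

theorem Polynomial.iteratedDeriv_eval {𝕜 : Type*} [NontriviallyNormedField 𝕜] (p : 𝕜[X])
    (n : ℕ) : iteratedDeriv n (fun x => p.eval x) = fun x => (derivative^[n] p).eval x := by
  induction n generalizing p with
  | zero => simp
  | succ n ih =>
    have h : _root_.deriv (fun x => p.eval x) = fun x => (derivative p).eval x := by
      funext x
      exact Polynomial.deriv p
    rw [iteratedDeriv_succ', h, ih, Function.iterate_succ_apply]

theorem legendreP_eq_eval (n : ℕ) (x : ℝ) :
    legendreP n x = (rodrigues n : ℝ[X]).eval x / (2 ^ n * n.factorial) := by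
  have h : (fun y : ℝ => (y ^ 2 - 1) ^ n) = fun y => ((X ^ 2 - 1 : ℝ[X]) ^ n).eval y := by
    simp
  rw [legendreP, h, iteratedDeriv_eval, rodrigues, one_div_mul_eq_div]

theorem legendreP_zero (x : ℝ) : legendreP 0 x = 1 := by
  simp [legendreP_eq_eval, rodrigues_zero]

theorem legendreP_one (x : ℝ) : legendreP 1 x = x := by
  simp [legendreP_eq_eval, rodrigues_one]

theorem legendreP_succ_succ (n : ℕ) (x : ℝ) :
    (n + 2) * legendreP (n + 2) x =
      (2 * n + 3) * x * legendreP (n + 1) x - (n + 1) * legendreP n x := by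
  have h := congrArg (eval x) (rodrigues_succ_succ (R := ℝ) n)
  simp only [eval_sub, eval_mul, eval_add, eval_pow, eval_X, eval_natCast, eval_ofNat,
    eval_one] at h
  simp only [legendreP_eq_eval, h, Nat.factorial_succ, pow_succ]
  push_cast
  field_simp
  ring

theorem mul_legendreP (n : ℕ) (x : ℝ) :
    (2 * n + 1) * x * legendreP n x = n * legendreP (n - 1) x + (n + 1) * legendreP (n + 1) x := by
  cases n with
  | zero => simp [legendreP_zero, legendreP_one]
  | succ n =>
    have h := legendreP_succ_succ n x
    push_cast at h ⊢
    linear_combination -h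

theorem Real.sqrt_div_two_div_sqrt_mul {x y : ℝ} (hx : 0 < x) (hy : 0 < y) :
    √(x / 2) / √(x * y) = √(y / 2) / y := by
  rw [Real.sqrt_div hx.le, Real.sqrt_div hy.le, Real.sqrt_mul hx.le]
  have hy' : √y ^ 2 = y := Real.sq_sqrt hy.le
  have : 0 < √x := Real.sqrt_pos.2 hx
  have : 0 < √y := Real.sqrt_pos.2 hy
  field_simp
  rw [hy']

theorem legendreC_mul_sqrt_succ (n : ℕ) :
    legendreC n * √((2 * ((n + 1 : ℕ) : ℝ) + 1) / 2) =
      (n + 1) / (2 * n + 1) * √((2 * n + 1) / 2) := by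
  have h := Real.sqrt_div_two_div_sqrt_mul (x := 2 * n + 3) (y := 2 * n + 1)
    (by positivity) (by positivity)
  rw [legendreC]
  push_cast
  rw [show 2 * ((n : ℝ) + 1) + 1 = 2 * n + 3 by ring, div_mul_eq_mul_div, mul_div_assoc, h]
  ring

theorem legendreC_pred_mul_sqrt (p : ℕ) :
    (if p = 0 then 0 else legendreC (p - 1)) * √((2 * ((p - 1 : ℕ) : ℝ) + 1) / 2) =
      p / (2 * p + 1) * √((2 * p + 1) / 2) := by
  cases p with
  | zero => simp
  | succ m =>
    have h := Real.sqrt_div_two_div_sqrt_mul (x := 2 * m + 1) (y := 2 * m + 3)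
      (by positivity) (by positivity)
    rw [if_neg m.succ_ne_zero, Nat.add_sub_cancel, legendreC, mul_comm (2 * (m : ℝ) + 3),
      div_mul_eq_mul_div, mul_div_assoc, h]
    push_cast
    rw [show 2 * ((m : ℝ) + 1) + 1 = 2 * m + 3 by ring]
    ring

theorem mul_legendreL (p : ℕ) (a : ℝ) :
    a * legendreL p a = (if p = 0 then 0 else legendreC (p - 1)) * legendreL (p - 1) a +
      legendreC p * legendreL (p + 1) a := by
  simp only [legendreL, ← mul_assoc, legendreC_pred_mul_sqrt, legendreC_mul_sqrt_succ]
  have hp : (2 * p + 1 : ℝ) ≠ 0 := by positivity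
  calc a * √((2 * p + 1) / 2) * legendreP p a
      = √((2 * p + 1) / 2) / (2 * p + 1) * ((2 * p + 1) * a * legendreP p a) := by
        field_simp
    _ = _ := by rw [mul_legendreP]; ring

theorem affine_mul_legendreL_mul (p : ℕ) (γ δ a w : ℝ) :
    (γ + δ * a) * (legendreL p a * w) = γ * (legendreL p a * w) +
      δ * ((if p = 0 then 0 else legendreC (p - 1)) * (legendreL (p - 1) a * w) +
        legendreC p * (legendreL (p + 1) a * w)) := by
  linear_combination (δ * w) * mul_legendreL p a

theorem affine_mul_mul_legendreL (q : ℕ) (γ δ b v : ℝ) :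
    (γ + δ * b) * (v * legendreL q b) = γ * (v * legendreL q b) +
      δ * ((if q = 0 then 0 else legendreC (q - 1)) * (v * legendreL (q - 1) b) +
        legendreC q * (v * legendreL (q + 1) b)) := by
  linear_combination (δ * v) * mul_legendreL q b

@[fun_prop]
theorem continuous_legendreL (n : ℕ) : Continuous (legendreL n) := by
  have h : legendreP n = fun x => (rodrigues n : ℝ[X]).eval x / (2 ^ n * n.factorial) :=
    funext (legendreP_eq_eval n)
  unfold legendreL
  rw [h]
  fun_prop

end Legendre

section Integrals

theorem intervalIntegral_intervalIntegral_eq_setIntegral_prod {E : Type*}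
    [NormedAddCommGroup E] [NormedSpace ℝ E] {a b c d : ℝ} (hab : a ≤ b) (hcd : c ≤ d)
    {f : ℝ → ℝ → E} (hf : ContinuousOn (Function.uncurry f) (Icc a b ×ˢ Icc c d)) :
    ∫ x in a..b, ∫ y in c..d, f x y = ∫ z in Icc a b ×ˢ Icc c d, f z.1 z.2 := by
  rw [Measure.volume_eq_prod, setIntegral_prod (fun z => f z.1 z.2) (hf.integrableOn_compact
      (isCompact_Icc.prod isCompact_Icc)), intervalIntegral.integral_of_le hab,
    ← integral_Icc_eq_integral_Ioc]
  refine setIntegral_congr_fun measurableSet_Icc fun x _ => ?_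
  rw [intervalIntegral.integral_of_le hcd, ← integral_Icc_eq_integral_Ioc]

theorem hasDerivAt_setIntegral_of_continuousOn {α E : Type*} [TopologicalSpace α]
    [MeasurableSpace α] [OpensMeasurableSpace α] [NormedAddCommGroup E] [NormedSpace ℝ E]
    {μ : Measure α} [IsFiniteMeasureOnCompacts μ] {K : Set α} (hK : IsCompact K)
    (hKm : MeasurableSet K) {F F' : ℝ → α → E} (hF : ∀ t, ContinuousOn (F t) K)
    (hF' : ContinuousOn (Function.uncurry F') (univ ×ˢ K))
    (hFF' : ∀ t, ∀ z ∈ K, HasDerivAt (F · z) (F' t z) t) (t₀ : ℝ) :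
    HasDerivAt (fun t => ∫ z in K, F t z ∂μ) (∫ z in K, F' t₀ z ∂μ) t₀ := by
  have := isFiniteMeasure_restrict.2 (hK.measure_lt_top (μ := μ)).ne
  obtain ⟨C, hC⟩ := (isCompact_Icc (a := t₀ - 1) (b := t₀ + 1)).prod hK
    |>.exists_bound_of_continuousOn (hF'.mono (prod_mono (subset_univ _) subset_rfl))
  have h_bound : ∀ᵐ z ∂μ.restrict K, ∀ t ∈ Metric.ball t₀ 1, ‖F' t z‖ ≤ C := by
    filter_upwards [ae_restrict_mem hKm] with z hz t ht
    rw [Real.ball_eq_Ioo] at ht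
    exact hC (t, z) ⟨Ioo_subset_Icc_self ht, hz⟩
  have h_diff : ∀ᵐ z ∂μ.restrict K, ∀ t ∈ Metric.ball t₀ 1, HasDerivAt (F · z) (F' t z) t := by
    filter_upwards [ae_restrict_mem hKm] with z hz t _ using hFF' t z hz
  exact (hasDerivAt_integral_of_dominated_loc_of_deriv_le (Metric.ball_mem_nhds t₀ one_pos)
    (.of_forall fun t => (hF t).aestronglyMeasurable_of_isCompact hK hKm)
    ((hF t₀).integrableOn_compact' hK hKm)
    ((hF'.uncurry_left t₀ (mem_univ t₀)).aestronglyMeasurable_of_isCompact hK hKm)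
    h_bound (integrable_const C) h_diff).2

theorem Matrix.integral_mulVec {α ι κ : Type*} [MeasurableSpace α] {μ : Measure α} [Fintype ι]
    [Fintype κ] (M : Matrix ι κ ℝ) {f : α → κ → ℝ} (hf : Integrable f μ) :
    ∫ a, M *ᵥ f a ∂μ = M *ᵥ ∫ a, f a ∂μ :=
  (LinearMap.toContinuousLinearMap (Matrix.mulVecLin M)).integral_comp_comm hf

theorem MeasureTheory.Integrable.matrix_mulVec {α ι κ : Type*} [MeasurableSpace α]
    {μ : Measure α} [Fintype ι] [Fintype κ] (M : Matrix ι κ ℝ) {f : α → κ → ℝ}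
    (hf : Integrable f μ) : Integrable (fun a => M *ᵥ f a) μ :=
  (LinearMap.toContinuousLinearMap (Matrix.mulVecLin M)).integrable_comp hf

theorem setIntegral_smul_eq_of_eqOn {α E : Type*} [MeasurableSpace α] [NormedAddCommGroup E]
    [NormedSpace ℝ E] {μ : Measure α} {s : Set α} (hs : MeasurableSet s)
    {φ ψ₁ ψ₂ ψ₃ : α → ℝ} {Y : α → E} {a b c d : ℝ}
    (h : EqOn φ (fun z => a * ψ₁ z + b * (c * ψ₂ z + d * ψ₃ z)) s)
    (h₁ : IntegrableOn (fun z => ψ₁ z • Y z) s μ) (h₂ : IntegrableOn (fun z => ψ₂ z • Y z) s μ)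
    (h₃ : IntegrableOn (fun z => ψ₃ z • Y z) s μ) :
    ∫ z in s, φ z • Y z ∂μ = a • ∫ z in s, ψ₁ z • Y z ∂μ +
      b • (c • ∫ z in s, ψ₂ z • Y z ∂μ + d • ∫ z in s, ψ₃ z • Y z ∂μ) := by
  rw [setIntegral_congr_fun hs fun z hz => by
      rw [h hz, add_smul, mul_smul, mul_smul, add_smul, mul_smul, mul_smul],
    integral_add, integral_smul, integral_smul, integral_add, integral_smul, integral_smul]
  exacts [h₂.smul c, h₃.smul d, h₁.smul a, ((h₂.smul c).add (h₃.smul d)).smul b]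

end Integrals

section LegendreMoment

variable {E : Type*} [NormedAddCommGroup E] [NormedSpace ℝ E]

noncomputable def legendreMoment (μ : Measure (ℝ × ℝ)) (K : Set (ℝ × ℝ)) (Y : ℝ × ℝ → E)
    (p q : ℕ) : E :=
  ∫ z in K, (legendreL p z.1 * legendreL q z.2) • Y z ∂μ

variable {μ : Measure (ℝ × ℝ)} [IsFiniteMeasureOnCompacts μ] {K : Set (ℝ × ℝ)}

theorem continuousOn_legendreL_mul_smul {Y : ℝ × ℝ → E} (hY : ContinuousOn Y K) (p q : ℕ) :
    ContinuousOn (fun z => (legendreL p z.1 * legendreL q z.2) • Y z) K :=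
  (by fun_prop : Continuous fun z : ℝ × ℝ => legendreL p z.1 * legendreL q z.2).continuousOn.smul hY

theorem hasDerivAt_legendreMoment (hK : IsCompact K) {Y Y' : ℝ → ℝ × ℝ → E}
    (hY : ∀ t, ContinuousOn (Y t) K) (hY' : ContinuousOn (Function.uncurry Y') (univ ×ˢ K))
    (hYY' : ∀ t, ∀ z ∈ K, HasDerivAt (Y · z) (Y' t z) t) (p q : ℕ) (t₀ : ℝ) :
    HasDerivAt (fun t => legendreMoment μ K (Y t) p q) (legendreMoment μ K (Y' t₀) p q) t₀ :=
  hasDerivAt_setIntegral_of_continuousOn hK hK.measurableSet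
    (F' := fun t z => (legendreL p z.1 * legendreL q z.2) • Y' t z)
    (fun t => continuousOn_legendreL_mul_smul (hY t) p q)
    ((by fun_prop : Continuous fun w : ℝ × ℝ × ℝ => legendreL p w.2.1 * legendreL q w.2.2)
      |>.continuousOn.smul hY')
    (fun t z hz => (hYY' t z hz).const_smul (legendreL p z.1 * legendreL q z.2)) t₀

variable {Y : ℝ × ℝ → E}

theorem setIntegral_affine_fst_mul_smul (hK : IsCompact K) (hY : ContinuousOn Y K)
    (p q : ℕ) (γ δ : ℝ) :
    ∫ z in K, ((γ + δ * z.1) * (legendreL p z.1 * legendreL q z.2)) • Y z ∂μ =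
      γ • legendreMoment μ K Y p q +
        δ • ((if p = 0 then 0 else legendreC (p - 1) • legendreMoment μ K Y (p - 1) q) +
          legendreC p • legendreMoment μ K Y (p + 1) q) := by
  rw [setIntegral_smul_eq_of_eqOn hK.measurableSet
      (fun z _ => affine_mul_legendreL_mul p γ δ z.1 (legendreL q z.2))
      ((continuousOn_legendreL_mul_smul hY p q).integrableOn_compact hK)
      ((continuousOn_legendreL_mul_smul hY (p - 1) q).integrableOn_compact hK)
      ((continuousOn_legendreL_mul_smul hY (p + 1) q).integrableOn_compact hK),
    ite_smul, zero_smul]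
  rfl

theorem setIntegral_affine_snd_mul_smul (hK : IsCompact K) (hY : ContinuousOn Y K)
    (p q : ℕ) (γ δ : ℝ) :
    ∫ z in K, ((γ + δ * z.2) * (legendreL p z.1 * legendreL q z.2)) • Y z ∂μ =
      γ • legendreMoment μ K Y p q +
        δ • ((if q = 0 then 0 else legendreC (q - 1) • legendreMoment μ K Y p (q - 1)) +
          legendreC q • legendreMoment μ K Y p (q + 1)) := by
  rw [setIntegral_smul_eq_of_eqOn hK.measurableSet
      (fun z _ => affine_mul_mul_legendreL q γ δ z.2 (legendreL p z.1))
      ((continuousOn_legendreL_mul_smul hY p q).integrableOn_compact hK)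
      ((continuousOn_legendreL_mul_smul hY p (q - 1)).integrableOn_compact hK)
      ((continuousOn_legendreL_mul_smul hY p (q + 1)).integrableOn_compact hK),
    ite_smul, zero_smul]
  rfl

end LegendreMoment

theorem legendreMoment_of_eqOn_affine_smul_mulVec {ι κ : Type*} [Fintype ι] [Fintype κ]
    {μ : Measure (ℝ × ℝ)} [IsFiniteMeasureOnCompacts μ] {K : Set (ℝ × ℝ)} (hK : IsCompact K)
    (A B : Matrix ι κ ℝ) (γ δ γ' δ' : ℝ) {Y : ℝ × ℝ → κ → ℝ} {Y' : ℝ × ℝ → ι → ℝ}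
    (hY : ContinuousOn Y K)
    (hY' : EqOn Y' (fun z => (γ + δ * z.1) • A *ᵥ Y z + (γ' + δ' * z.2) • B *ᵥ Y z) K)
    (p q : ℕ) :
    legendreMoment μ K Y' p q =
      A *ᵥ (γ • legendreMoment μ K Y p q +
          δ • ((if p = 0 then 0 else legendreC (p - 1) • legendreMoment μ K Y (p - 1) q) +
            legendreC p • legendreMoment μ K Y (p + 1) q)) +
        B *ᵥ (γ' • legendreMoment μ K Y p q +
          δ' • ((if q = 0 then 0 else legendreC (q - 1) • legendreMoment μ K Y p (q - 1)) +
            legendreC q • legendreMoment μ K Y p (q + 1))) := by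
  have hsplit : EqOn (fun z => (legendreL p z.1 * legendreL q z.2) • Y' z)
      (fun z => A *ᵥ (((γ + δ * z.1) * (legendreL p z.1 * legendreL q z.2)) • Y z) +
        B *ᵥ (((γ' + δ' * z.2) * (legendreL p z.1 * legendreL q z.2)) • Y z)) K := fun z hz => by
    simp only [hY' hz, Matrix.mulVec_smul, smul_add, smul_smul, mul_comm]
  have hint (φ : ℝ × ℝ → ℝ) (hφ : Continuous φ) : IntegrableOn (fun z => φ z • Y z) K μ :=
    (hφ.continuousOn.smul hY).integrableOn_compact hK
  rw [legendreMoment, setIntegral_congr_fun hK.measurableSet hsplit, integral_add,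
    Matrix.integral_mulVec, Matrix.integral_mulVec, setIntegral_affine_fst_mul_smul hK hY,
    setIntegral_affine_snd_mul_smul hK hY]
  all_goals first
    | exact hint _ (by fun_prop)
    | exact (hint _ (by fun_prop)).matrix_mulVec _

theorem legendre_moment_dynamics_general (N m : ℕ)
    (𝒜 : Matrix (Fin N) (Fin N) ℝ) (ℬ : Fin m → Matrix (Fin N) (Fin N) ℝ)
    (u : Fin m → ℝ → ℝ)
    (αbar αund βbar βund : ℝ)
    (X : ℝ → ℝ → ℝ → (Fin N → ℝ))
    (hXcont : ContinuousOn (fun z : ℝ × ℝ × ℝ => X z.1 z.2.1 z.2.2)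
      (Set.univ ×ˢ Set.Icc (-1 : ℝ) 1 ×ˢ Set.Icc (-1 : ℝ) 1))
    (Xt : ℝ → ℝ → ℝ → (Fin N → ℝ))
    (hXt : ∀ t : ℝ, ∀ a ∈ Set.Icc (-1 : ℝ) 1, ∀ b ∈ Set.Icc (-1 : ℝ) 1,
      HasDerivAt (fun s : ℝ => X s a b) (Xt t a b) t)
    (hXtcont : ContinuousOn (fun z : ℝ × ℝ × ℝ => Xt z.1 z.2.1 z.2.2)
      (Set.univ ×ˢ Set.Icc (-1 : ℝ) 1 ×ˢ Set.Icc (-1 : ℝ) 1))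
    (hPDE : ∀ t : ℝ, ∀ a ∈ Set.Icc (-1 : ℝ) 1, ∀ b ∈ Set.Icc (-1 : ℝ) 1,
      Xt t a b = (αbar + αund * a) • 𝒜.mulVec (X t a b) +
        (βbar + βund * b) • (∑ j, u j t • ℬ j).mulVec (X t a b))
    (x : ℕ → ℕ → ℝ → (Fin N → ℝ))
    (hx : ∀ p q : ℕ, ∀ t : ℝ,
      x p q t = ∫ a in (-1 : ℝ)..1, ∫ b in (-1 : ℝ)..1,
        (legendreL p a * legendreL q b) • X t a b) :
    ∀ p q : ℕ, ∀ t : ℝ,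
      HasDerivAt (x p q)
        (𝒜.mulVec (αbar • x p q t +
            αund • ((if p = 0 then 0 else legendreC (p - 1) • x (p - 1) q t) +
              legendreC p • x (p + 1) q t)) +
          (∑ j, u j t • ℬ j).mulVec (βbar • x p q t +
            βund • ((if q = 0 then 0 else legendreC (q - 1) • x p (q - 1) t) +
              legendreC q • x p (q + 1) t))) t := by
  intro p q t
  set S := Icc (-1 : ℝ) 1 ×ˢ Icc (-1 : ℝ) 1
  have hS : IsCompact S := isCompact_Icc.prod isCompact_Icc
  have hXs (s : ℝ) : ContinuousOn (fun z : ℝ × ℝ => X s z.1 z.2) S :=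
    ContinuousOn.uncurry_left (f := fun s (z : ℝ × ℝ) => X s z.1 z.2) s (mem_univ s) hXcont
  have hmoment (p q : ℕ) (s : ℝ) :
      x p q s = legendreMoment volume S (fun z => X s z.1 z.2) p q := by
    rw [hx, intervalIntegral_intervalIntegral_eq_setIntegral_prod (by norm_num) (by norm_num)
      (f := fun a b => (legendreL p a * legendreL q b) • X s a b)
      (continuousOn_legendreL_mul_smul (hXs s) p q)]
    rfl
  have hderiv := hasDerivAt_legendreMoment (μ := volume) hS hXs (Y' := fun s z => Xt s z.1 z.2)
    hXtcont (fun s z hz => hXt s z.1 hz.1 z.2 hz.2) p q t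
  rw [← funext (hmoment p q), legendreMoment_of_eqOn_affine_smul_mulVec hS _ _ _ _ _ _ (hXs t)
    (fun z hz => hPDE t z.1 hz.1 z.2 hz.2)] at hderiv
  simpa only [hmoment] using hderiv

/-- exact moment dynamics of the Legendre coefficients
`x_{p,q}(t) = ∫∫ X(t,a,b) L_p(a) L_q(b) da db` of a solution of the
parameterized bilinear system
`∂X/∂t = α(a)·𝒜·X + β(b)·(Σ_j u_j(t)·ℬ_j)·X` with `α(a) = ᾱ + α̲·a`,
`β(b) = β̄ + β̲·b`. -/
theorem legendre_moment_dynamics (N m : ℕ)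
    (𝒜 : Matrix (Fin N) (Fin N) ℝ) (ℬ : Fin m → Matrix (Fin N) (Fin N) ℝ)
    (u : Fin m → ℝ → ℝ) (hu : ∀ j, Continuous (u j))
    (αbar αund βbar βund : ℝ)
    (X : ℝ → ℝ → ℝ → (Fin N → ℝ))
    (hXcont : ContinuousOn (fun z : ℝ × ℝ × ℝ => X z.1 z.2.1 z.2.2)
      (Set.univ ×ˢ Set.Icc (-1 : ℝ) 1 ×ˢ Set.Icc (-1 : ℝ) 1))
    (Xt : ℝ → ℝ → ℝ → (Fin N → ℝ))
    (hXt : ∀ t : ℝ, ∀ a ∈ Set.Icc (-1 : ℝ) 1, ∀ b ∈ Set.Icc (-1 : ℝ) 1,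
      HasDerivAt (fun s : ℝ => X s a b) (Xt t a b) t)
    (hXtcont : ContinuousOn (fun z : ℝ × ℝ × ℝ => Xt z.1 z.2.1 z.2.2)
      (Set.univ ×ˢ Set.Icc (-1 : ℝ) 1 ×ˢ Set.Icc (-1 : ℝ) 1))
    (hPDE : ∀ t : ℝ, ∀ a ∈ Set.Icc (-1 : ℝ) 1, ∀ b ∈ Set.Icc (-1 : ℝ) 1,
      Xt t a b = (αbar + αund * a) • 𝒜.mulVec (X t a b) +
        (βbar + βund * b) • (∑ j, u j t • ℬ j).mulVec (X t a b))
    (x : ℕ → ℕ → ℝ → (Fin N → ℝ))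
    (hx : ∀ p q : ℕ, ∀ t : ℝ,
      x p q t = ∫ a in (-1 : ℝ)..1, ∫ b in (-1 : ℝ)..1,
        (legendreL p a * legendreL q b) • X t a b) :
    ∀ p q : ℕ, ∀ t : ℝ,
      HasDerivAt (x p q)
        (𝒜.mulVec (αbar • x p q t +
            αund • ((if p = 0 then 0 else legendreC (p - 1) • x (p - 1) q t) +
              legendreC p • x (p + 1) q t)) +
          (∑ j, u j t • ℬ j).mulVec (βbar • x p q t +
            βund • ((if q = 0 then 0 else legendreC (q - 1) • x p (q - 1) t) +
              legendreC q • x p (q + 1) t))) t :=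
  legendre_moment_dynamics_general N m 𝒜 ℬ u αbar αund βbar βund X hXcont Xt hXt hXtcont hPDE x hx
end

section
/- Let A and B be real (or complex) N×N matrices. Then the derivative of the matrix exponential in the direction B is given by the integral (Duhamel) formula: d/du exp(A + uB) evaluated at u = 0 equals ∫_0^1 exp(s·A) · B · exp((1−s)·A) ds. Equivalently, the map u ↦ exp(A + uB) is differentiable at u = 0 with derivative ∫_0^1 e^{sA} B e^{(1−s)A} ds. (This exact formula underlies the computation of the Jacobian entries ∂U_k/∂u_n^m(t_k) of the evolution operator with respect to the piecewise-constant control amplitudes.) -/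
/-!
The fundamental theorem of calculus applied to `t ↦ exp (t • M) * exp ((1 - t) • A)`, whose
derivative is `exp (t • M) * (M - A) * exp ((1 - t) • A)`, gives
`exp M - exp A = ∫₀¹ exp (s • M) * (M - A) * exp ((1 - s) • A) ds` in any real Banach algebra.
Taking `M = A + u • B` writes `exp (A + u • B) - exp A = u • I u` with
`I u = ∫₀¹ exp (s • (A + u • B)) * B * exp ((1 - s) • A) ds`, which is continuous in `u`
because its integrand is jointly continuous; so the difference quotients converge to `I 0`.
-/

open Matrix

attribute [local instance] Matrix.linftyOpNormedAddCommGroup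
  Matrix.linftyOpNormedSpace Matrix.linftyOpNormedRing Matrix.linftyOpNormedAlgebra

open NormedSpace Filter Topology

theorem hasDerivAt_of_sub_eq_smul {𝕜 E : Type*} [NontriviallyNormedField 𝕜]
    [NormedAddCommGroup E] [NormedSpace 𝕜 E] {f g : 𝕜 → E} {x : 𝕜}
    (hfg : ∀ u, f u - f x = (u - x) • g u) (hg : ContinuousAt g x) :
    HasDerivAt f (g x) x := by
  refine hasDerivAt_iff_tendsto_slope.mpr <| (hg.tendsto.mono_left nhdsWithin_le_nhds).congr' ?_
  filter_upwards [self_mem_nhdsWithin] with u hu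
  rw [slope_def_module, hfg, smul_smul, inv_mul_cancel₀ (sub_ne_zero.mpr hu), one_smul]

section BanachAlgebra

variable {𝔸 : Type*} [NormedRing 𝔸] [NormedAlgebra ℝ 𝔸] [CompleteSpace 𝔸]

@[fun_prop]
theorem exp_continuous_of_normedAlgebra_real : Continuous (exp : 𝔸 → 𝔸) :=
  let +nondep : NormedAlgebra ℚ 𝔸 := .restrictScalars ℚ ℝ 𝔸
  exp_continuous

theorem hasDerivAt_exp_smul_mul_exp_one_sub_smul (M A : 𝔸) (s : ℝ) :
    HasDerivAt (fun t : ℝ => exp (t • M) * exp ((1 - t) • A))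
      (exp (s • M) * (M - A) * exp ((1 - s) • A)) s := by
  have hM := hasDerivAt_exp_smul_const M s
  have hA := (hasDerivAt_exp_smul_const' A (1 - s)).scomp s ((hasDerivAt_id s).const_sub 1)
  refine (hM.mul hA).congr_deriv ?_
  simp only [neg_one_smul, Function.comp_apply]
  noncomm_ring

theorem exp_sub_exp_eq_integral (M A : 𝔸) :
    exp M - exp A = ∫ s in (0 : ℝ)..1, exp (s • M) * (M - A) * exp ((1 - s) • A) := by
  rw [intervalIntegral.integral_eq_sub_of_hasDerivAt
    (fun s _ => hasDerivAt_exp_smul_mul_exp_one_sub_smul M A s)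
    (Continuous.intervalIntegrable (by fun_prop) 0 1)]
  simp

variable {𝕂 : Type*} [NontriviallyNormedField 𝕂] [NormedAlgebra 𝕂 𝔸] [SMulCommClass ℝ 𝕂 𝔸]

theorem hasDerivAt_exp_add_smul (A B : 𝔸) :
    HasDerivAt (fun u : 𝕂 => exp (A + u • B))
      (∫ s in (0 : ℝ)..1, exp (s • A) * B * exp ((1 - s) • A)) 0 := by
  set I : 𝕂 → 𝔸 := fun u => ∫ s in (0 : ℝ)..1, exp (s • (A + u • B)) * B * exp ((1 - s) • A)
  have hI_cont : Continuous I :=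
    intervalIntegral.continuous_parametric_intervalIntegral_of_continuous' (by fun_prop) 0 1
  have hexp_sub : ∀ u : 𝕂, exp (A + u • B) - exp (A + (0 : 𝕂) • B) = (u - 0) • I u := by
    intro u
    simp only [zero_smul, add_zero, sub_zero, exp_sub_exp_eq_integral, add_sub_cancel_left,
      mul_smul_comm, smul_mul_assoc, intervalIntegral.integral_smul, I]
  simpa [I] using hasDerivAt_of_sub_eq_smul hexp_sub hI_cont.continuousAt

end BanachAlgebra

/-- Duhamel formula: the map `u ↦ exp(A + uB)` on N×N matrices
over ℝ or ℂ is differentiable at `u = 0` with derivative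
`∫_0^1 e^{sA} B e^{(1−s)A} ds`. -/
theorem deriv_exp_duhamel (𝕂 : Type*) [RCLike 𝕂] (N : ℕ)
    (A B : Matrix (Fin N) (Fin N) 𝕂) :
    HasDerivAt (fun u : 𝕂 => NormedSpace.exp (A + u • B))
      (∫ s in (0 : ℝ)..1,
        NormedSpace.exp (s • A) * B * NormedSpace.exp ((1 - s) • A))
      0 :=
  hasDerivAt_exp_add_smul A B
end
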